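/- arXiv:2105.03880 — 3 statements merged into one kernel-verified Lean document; each statement's English description precedes it below -/
import Mathlib

section
/- Let m ≤ n be positive integers with s(m+n) = s(m) + s(n) (i.e., C(m+n,m) is odd). If ⌊m/2^i⌋ ≠ 0 for some i ≥ 1, then ⌊n/2^{i+1}⌋ ≠ 0. -/
/-! Oddness of `C(m+n, m)` means, by Kummer's theorem, that adding `m` and `n` in base 2 produces
no carry, so `m % 2^j + n % 2^j < 2^j` for every `j ≥ 1`. If `n < 2^(i+1)` while `2^i ≤ m ≤ n`, then
taking `j = i + 1` gives `m + n < 2^(i+1) ≤ m + n`. -/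

def s (k : ℕ) : ℕ := padicValNat 2 (Nat.factorial k)

open Nat

theorem padicValNat_factorial_add (p : ℕ) [Fact p.Prime] (m n : ℕ) :
    padicValNat p (m + n)! =
      padicValNat p ((m + n).choose m) + (padicValNat p m ! + padicValNat p n !) := by
  rw [← padicValNat.mul m.factorial_ne_zero n.factorial_ne_zero,
    ← padicValNat.mul (choose_pos (le_add_right m n)).ne' (by positivity), ← mul_assoc,
    choose_symm_add, add_choose_mul_factorial_mul_factorial]

theorem padicValNat_two_choose_eq_zero_iff_s_add (m n : ℕ) :
    padicValNat 2 ((m + n).choose m) = 0 ↔ s (m + n) = s m + s n := by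
  have : Fact (Nat.Prime 2) := ⟨prime_two⟩
  have := padicValNat_factorial_add 2 m n
  unfold s
  omega

theorem mod_pow_add_mod_pow_lt_of_padicValNat_choose_eq_zero {p n k : ℕ} [Fact p.Prime]
    (hchoose : padicValNat p ((n + k).choose k) = 0) {j : ℕ} (hj : 1 ≤ j) :
    k % p ^ j + n % p ^ j < p ^ j := by
  rw [padicValNat_choose' (b := log p (n + k) + j + 1) (by omega), Finset.card_eq_zero,
    Finset.filter_eq_empty_iff] at hchoose
  exact Nat.lt_of_not_le (hchoose (Finset.mem_Ico.mpr ⟨hj, by omega⟩))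

theorem div_ne_zero_succ_general (m n i : ℕ) (hmn : m ≤ n)
    (h : s (m + n) = s m + s n) (hdiv : m / 2 ^ i ≠ 0) :
    n / 2 ^ (i + 1) ≠ 0 := by
  have : Fact (Nat.Prime 2) := ⟨prime_two⟩
  have hm : 2 ^ i ≤ m := (Nat.div_ne_zero_iff.mp hdiv).2
  rw [Nat.div_ne_zero_iff]
  refine ⟨by positivity, Nat.le_of_not_lt fun hn => ?_⟩
  have hodd : padicValNat 2 ((n + m).choose m) = 0 := by
    rw [add_comm]; exact (padicValNat_two_choose_eq_zero_iff_s_add m n).mpr h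
  have hcarry := mod_pow_add_mod_pow_lt_of_padicValNat_choose_eq_zero hodd (Nat.le_add_left 1 i)
  rw [Nat.mod_eq_of_lt (hmn.trans_lt hn), Nat.mod_eq_of_lt hn, pow_succ] at hcarry
  omega

theorem div_ne_zero_succ (m n i : ℕ) (hm : 0 < m) (hmn : m ≤ n)
    (h : s (m + n) = s m + s n) (hi : 1 ≤ i) (hdiv : m / 2 ^ i ≠ 0) :
    n / 2 ^ (i + 1) ≠ 0 :=
  div_ne_zero_succ_general m n i hmn h hdiv
end

section
/- Let m ≤ n be positive integers such that the binomial coefficient C(m+n, m) is odd. If 2^t ≤ m+n for some t ≥ 1 (i.e., ⌊(m+n)/2^t⌋ ≠ 0), then n ≥ 2^t. In particular, if both m,n ≥ 1, then m < n. -/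
/-!
By Kummer's theorem the exponent of `2` in `choose (m + n) m` counts the carries in the binary
addition `m + n`, so oddness means there are none. If `m ≤ n < 2 ^ t ≤ m + n`, the addition would
carry into position `t`. Taking `2 ^ t` the largest power of two not exceeding `m + n` gives
`m < 2 ^ t ≤ n`.
-/

open Nat Finset

theorem Nat.mod_pow_add_mod_pow_lt_of_not_dvd_choose {p m n : ℕ} (hp : p.Prime)
    (h : ¬p ∣ choose (m + n) m) (i : ℕ) : m % p ^ i + n % p ^ i < p ^ i := by
  rcases Nat.eq_zero_or_pos i with rfl | hi
  · simp [Nat.mod_one]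
  by_contra hcarry
  have hmem : i ∈ {j ∈ Ico 1 (log p (m + n) + 1 + i) | p ^ j ≤ m % p ^ j + n % p ^ j} := by
    simp only [mem_filter, mem_Ico]
    omega
  have hcount := factorization_choose' hp (n := n) (k := m) (b := log p (m + n) + 1 + i)
    (by rw [add_comm]; omega)
  rw [add_comm n m, factorization_eq_zero_of_not_dvd h] at hcount
  exact card_ne_zero_of_mem hmem hcount.symm

theorem Nat.pow_le_of_not_dvd_choose {p m n t : ℕ} (hp : p.Prime) (h : ¬p ∣ choose (m + n) m)
    (hmn : m ≤ n) (ht : p ^ t ≤ m + n) : p ^ t ≤ n := by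
  by_contra! hn
  have hnocarry := mod_pow_add_mod_pow_lt_of_not_dvd_choose hp h t
  rw [mod_eq_of_lt (by omega), mod_eq_of_lt hn] at hnocarry
  omega

theorem ge_pow_of_choose_odd (m n : ℕ) (hm : 0 < m) (hmn : m ≤ n)
    (h : Odd (Nat.choose (m + n) m)) :
    (∀ t : ℕ, 1 ≤ t → 2 ^ t ≤ m + n → 2 ^ t ≤ n) ∧ m < n := by
  have hndvd : ¬2 ∣ choose (m + n) m := h.not_two_dvd_nat
  refine ⟨fun t _ ht => pow_le_of_not_dvd_choose prime_two hndvd hmn ht, ?_⟩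
  set t := log 2 (m + n)
  have hle : 2 ^ t ≤ n :=
    pow_le_of_not_dvd_choose prime_two hndvd hmn (pow_log_le_self 2 (by omega))
  have hlt : m + n < 2 * 2 ^ t := by
    simpa [pow_succ, mul_comm] using lt_pow_succ_log_self one_lt_two (m + n)
  omega
end

section
/- The subgroup S_m × S_{m-1} has odd index in S_{2m-1} if and only if m is a power of 2. -/
/-!
The symmetric group acts transitively on `(m-1)`-subsets, so the index is `C(2m-1, m-1)`.
By Kummer's theorem its 2-adic valuation is `s(m-1) + s(m) - s(2m-1)`, with `s` the binary digit
sum; as `2m-1 = 2(m-1) + 1`, `s(2m-1) = s(m-1) + 1`, so the valuation is `s(m) - 1`, which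
vanishes exactly when `m` has a single binary digit `1`.
-/

open scoped Pointwise

theorem index_stabilizer_perm_finset {α : Type*} [DecidableEq α] (s : Finset α) :
    (MulAction.stabilizer (Equiv.Perm α) s).index = (Nat.card α).choose s.card := by
  have : MulAction.IsPretransitive (Equiv.Perm α) (Set.powersetCard α s.card) :=
    Set.powersetCard.isPretransitive
  rw [← Set.powersetCard.card, ← MulAction.index_stabilizer_of_transitive (Equiv.Perm α)
    (Set.powersetCard.ofCard (n := s.card) rfl)]
  congr 1
  ext g
  simp [MulAction.mem_stabilizer_iff, ← Subtype.coe_inj]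

namespace Nat

theorem sum_digits_two_mul (n : ℕ) : (digits 2 (2 * n)).sum = (digits 2 n).sum := by
  rcases n.eq_zero_or_pos with rfl | hn
  · rfl
  · simp [digits_base_mul one_lt_two hn]

theorem sum_digits_two_mul_add_one (n : ℕ) :
    (digits 2 (2 * n + 1)).sum = (digits 2 n).sum + 1 := by
  rw [add_comm, digits_add 2 one_lt_two 1 n one_lt_two (.inl one_ne_zero), List.sum_cons,
    add_comm]

theorem sum_digits_two_eq_zero_iff {n : ℕ} : (digits 2 n).sum = 0 ↔ n = 0 := by
  induction n using evenOddRec with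
  | h0 => simp
  | h_even n ih => rw [sum_digits_two_mul, ih]; omega
  | h_odd n _ => rw [sum_digits_two_mul_add_one]; omega

theorem sum_digits_two_eq_one_iff {n : ℕ} : (digits 2 n).sum = 1 ↔ ∃ ℓ, n = 2 ^ ℓ := by
  induction n using evenOddRec with
  | h0 => simp [(Nat.two_pow_pos _).ne]
  | h_even n ih =>
    rw [sum_digits_two_mul, ih]
    constructor
    · rintro ⟨ℓ, rfl⟩
      exact ⟨ℓ + 1, by rw [pow_succ']⟩
    · rintro ⟨_ | ℓ, h⟩
      · omega
      · exact ⟨ℓ, by rw [pow_succ'] at h; omega⟩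
  | h_odd n _ =>
    rw [sum_digits_two_mul_add_one, add_eq_right, sum_digits_two_eq_zero_iff]
    constructor
    · rintro rfl
      exact ⟨0, rfl⟩
    · rintro ⟨_ | ℓ, h⟩
      · omega
      · rw [pow_succ'] at h; omega

theorem odd_iff_padicValNat_two_eq_zero {n : ℕ} (hn : n ≠ 0) :
    Odd n ↔ padicValNat 2 n = 0 := by
  rw [← not_even_iff_odd, even_iff_two_dvd, dvd_iff_padicValNat_ne_zero hn, not_not]

end Nat

theorem padicValNat_two_choose_two_mul_sub_one_add_one {m : ℕ} (hm : m ≠ 0) :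
    padicValNat 2 ((2 * m - 1).choose (m - 1)) + 1 = (Nat.digits 2 m).sum := by
  have kummer := sub_one_mul_padicValNat_choose_eq_sub_sum_digits (p := 2)
    (show m - 1 ≤ 2 * m - 1 by omega)
  have hodd : (Nat.digits 2 (2 * m - 1)).sum = (Nat.digits 2 (m - 1)).sum + 1 := by
    rw [← Nat.sum_digits_two_mul_add_one]; congr 2; omega
  have hsum : (Nat.digits 2 m).sum ≠ 0 := Nat.sum_digits_two_eq_zero_iff.not.mpr hm
  rw [show 2 * m - 1 - (m - 1) = m by omega, hodd] at kummer
  omega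

theorem odd_index_iff_pow_two (m : ℕ) (hm : 1 ≤ m)
    (Δ : Finset (Fin (2 * m - 1))) (hΔ : Δ.card = m - 1) :
    Odd (MulAction.stabilizer (Equiv.Perm (Fin (2 * m - 1))) Δ).index ↔
      ∃ ℓ : ℕ, m = 2 ^ ℓ := by
  have hm0 : m ≠ 0 := by omega
  rw [index_stabilizer_perm_finset, Nat.card_fin, hΔ,
    Nat.odd_iff_padicValNat_two_eq_zero (Nat.choose_pos (by omega)).ne',
    ← Nat.sum_digits_two_eq_one_iff, ← padicValNat_two_choose_two_mul_sub_one_add_one hm0]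
  omega
end
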